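/- arXiv:2112.12350 — 5 statements merged into one kernel-verified Lean document; each statement's English description precedes it below -/
import Mathlib

section
/- Let d ≥ 1, let s ∈ ℝ^d, let u ∈ ℝ^d be a unit vector, and let s_j = s + a•u and s_k = s + b•u with a, b > 0 be two sites on the same ray emanating from s. Let γ_j, γ_k > 1. Then ball(s,s_j,γ_j) ⊆ ball(s,s_k,γ_k) if and only if both a/(γ_j + 1) ≤ b/(γ_k + 1) and a/(γ_j − 1) ≤ b/(γ_k − 1), i.e., if and only if t*(s,s_j,γ_j) ≤ t*(s,s_k,γ_k) and t†(s,s_j,γ_j) ≤ t†(s,s_k,γ_k). -/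
/-!
For `γ > 1` the Apollonian ball `{p | γ‖p - s‖ ≤ ‖p - s'‖}` is a closed Euclidean ball: after
squaring and completing the square, `r² - ‖p - c‖²` is a positive multiple of
`‖p - s'‖² - γ²‖p - s‖²`.
When `s' = s + a • u`, this ball is the one with diameter the segment from `s - t† • u` to
`s + t* • u`. Two closed balls with diameters on a common line are nested iff the diameters are,
and for the segments `[-t†, t*]` this means `t*_j ≤ t*_k` and `t†_j ≤ t†_k`.
-/

open Metric

section Line

variable {E : Type*} [NormedAddCommGroup E] [NormedSpace ℝ E] {s u : E}

theorem dist_add_smul_add_smul (hu : ‖u‖ = 1) (t t' : ℝ) :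
    dist (s + t • u) (s + t' • u) = |t - t'| := by
  rw [dist_add_left, dist_eq_norm, ← sub_smul, norm_smul, hu, mul_one, Real.norm_eq_abs]

theorem add_smul_mem_closedBall_on_line_iff (hu : ‖u‖ = 1) {t x y : ℝ} :
    s + t • u ∈ closedBall (s + ((x - y) / 2) • u) ((x + y) / 2) ↔ -y ≤ t ∧ t ≤ x := by
  rw [mem_closedBall, dist_add_smul_add_smul hu, abs_le]
  constructor <;> intro h <;> constructor <;> linarith [h.1, h.2]

theorem closedBall_on_line_subset_iff (hu : ‖u‖ = 1) {x y x' y' : ℝ} (hr : 0 ≤ x + y) :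
    closedBall (s + ((x - y) / 2) • u) ((x + y) / 2) ⊆
        closedBall (s + ((x' - y') / 2) • u) ((x' + y') / 2) ↔ x ≤ x' ∧ y ≤ y' := by
  constructor
  · intro h
    have endpoint_mem (t : ℝ) (ht : -y ≤ t ∧ t ≤ x) : -y' ≤ t ∧ t ≤ x' :=
      (add_smul_mem_closedBall_on_line_iff hu).mp
        (h ((add_smul_mem_closedBall_on_line_iff hu).mpr ht))
    exact ⟨(endpoint_mem x ⟨by linarith, le_rfl⟩).2,
      neg_le_neg_iff.mp (endpoint_mem (-y) ⟨le_rfl, by linarith⟩).1⟩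
  · rintro ⟨hx, hy⟩
    refine closedBall_subset_closedBall' ?_
    rw [dist_add_smul_add_smul hu, add_comm, ← le_sub_iff_add_le, abs_le]
    constructor <;> linarith

end Line

section Apollonian

variable {E : Type*} [NormedAddCommGroup E] [InnerProductSpace ℝ E]

theorem apollonian_set_eq_closedBall (s s' : E) {γ : ℝ} (hγ : 1 < γ) :
    {p : E | γ * ‖p - s‖ ≤ ‖p - s'‖} =
      closedBall (s - (γ ^ 2 - 1)⁻¹ • (s' - s)) (γ * ‖s' - s‖ / (γ ^ 2 - 1)) := by
  have hk : 0 < γ ^ 2 - 1 := by nlinarith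
  ext p
  set v := s' - s
  have hsite : p - s' = (p - s) - v := (sub_sub_sub_cancel_right p s' s).symm
  have hcenter : p - (s - (γ ^ 2 - 1)⁻¹ • v) = (p - s) + (γ ^ 2 - 1)⁻¹ • v := by abel
  rw [Set.mem_ofPred_eq, mem_closedBall, dist_eq_norm, hsite, hcenter]
  set q := p - s
  rw [← pow_le_pow_iff_left₀ (by positivity) (norm_nonneg _) two_ne_zero,
    ← pow_le_pow_iff_left₀ (norm_nonneg _) (by positivity) two_ne_zero, norm_sub_sq_real,
    norm_add_sq_real, real_inner_smul_right, norm_smul, Real.norm_of_nonneg (by positivity)]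
  rw [div_pow, le_div_iff₀ (by positivity)]
  have key : (γ * ‖v‖) ^ 2 - (‖q‖ ^ 2 + 2 * ((γ ^ 2 - 1)⁻¹ * inner ℝ q v) +
      ((γ ^ 2 - 1)⁻¹ * ‖v‖) ^ 2) * (γ ^ 2 - 1) ^ 2 =
      (γ ^ 2 - 1) * (‖q‖ ^ 2 - 2 * inner ℝ q v + ‖v‖ ^ 2 - (γ * ‖q‖) ^ 2) := by
    field_simp
    ring
  rw [← sub_nonneg, ← sub_nonneg (a := (γ * ‖v‖) ^ 2), key, mul_nonneg_iff_of_pos_left hk]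

theorem apollonian_set_on_ray_eq_closedBall (s u : E) (hu : ‖u‖ = 1) {a γ : ℝ} (ha : 0 ≤ a)
    (hγ : 1 < γ) :
    {p : E | γ * ‖p - s‖ ≤ ‖p - (s + a • u)‖} =
      closedBall (s + ((a / (γ + 1) - a / (γ - 1)) / 2) • u)
        ((a / (γ + 1) + a / (γ - 1)) / 2) := by
  have hk : γ ^ 2 - 1 ≠ 0 := by nlinarith
  have hγ₁ : γ - 1 ≠ 0 := by linarith
  have hγ₂ : γ + 1 ≠ 0 := by linarith
  have hcenter : -(γ ^ 2 - 1)⁻¹ * a = (a / (γ + 1) - a / (γ - 1)) / 2 := by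
    field_simp; ring
  have hradius : γ * a / (γ ^ 2 - 1) = (a / (γ + 1) + a / (γ - 1)) / 2 := by
    field_simp; ring
  rw [apollonian_set_eq_closedBall s _ hγ, add_sub_cancel_left, norm_smul, hu, mul_one,
    Real.norm_of_nonneg ha, sub_eq_add_neg, ← neg_smul, smul_smul, hcenter, hradius]

end Apollonian

theorem apollonian_ball_subset_iff_on_ray_general (d : ℕ)
    (s u : EuclideanSpace ℝ (Fin d)) (hu : ‖u‖ = 1)
    (a b γj γk : ℝ) (ha : 0 < a) (hb : 0 < b) (hγj : 1 < γj) (hγk : 1 < γk) :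
    ({p : EuclideanSpace ℝ (Fin d) | γj * ‖p - s‖ ≤ ‖p - (s + a • u)‖} ⊆
        {p : EuclideanSpace ℝ (Fin d) | γk * ‖p - s‖ ≤ ‖p - (s + b • u)‖}) ↔
      (a / (γj + 1) ≤ b / (γk + 1) ∧ a / (γj - 1) ≤ b / (γk - 1)) := by
  have hγj₁ : 0 < γj - 1 := sub_pos.mpr hγj
  rw [apollonian_set_on_ray_eq_closedBall s u hu ha.le hγj,
    apollonian_set_on_ray_eq_closedBall s u hu hb.le hγk]
  exact closedBall_on_line_subset_iff hu (by positivity)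

/-- For sites on a common ray from `s`, inclusion of Apollonian balls is characterized by
the inequalities `t* ≤ t*` and `t† ≤ t†`. -/
theorem apollonian_ball_subset_iff_on_ray (d : ℕ) (hd : 1 ≤ d)
    (s u : EuclideanSpace ℝ (Fin d)) (hu : ‖u‖ = 1)
    (a b γj γk : ℝ) (ha : 0 < a) (hb : 0 < b) (hγj : 1 < γj) (hγk : 1 < γk) :
    ({p : EuclideanSpace ℝ (Fin d) | γj * ‖p - s‖ ≤ ‖p - (s + a • u)‖} ⊆
        {p : EuclideanSpace ℝ (Fin d) | γk * ‖p - s‖ ≤ ‖p - (s + b • u)‖}) ↔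
      (a / (γj + 1) ≤ b / (γk + 1) ∧ a / (γj - 1) ≤ b / (γk - 1)) :=
  apollonian_ball_subset_iff_on_ray_general d s u hu a b γj γk ha hb hγj hγk
end

section
/- Let d ≥ 1, let ε_S ∈ (0,1], let s ∈ ℝ^d, let J be a finite nonempty index set, and for each j ∈ J let s_j ∈ ℝ^d with s_j ≠ s and let γ_j ≥ 1 + ε_S. Define core := ⋂_{j ∈ J} ball(s,s_j,γ_j). Then there exist radii r₁, r₂ > 0 such that the closed ball of radius r₂ centered at s is contained in core, core is contained in the closed ball of radius r₁ centered at s, and r₁ ≤ (3/ε_S)·r₂. In particular, core is (3/ε_S)-fat. -/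
/-- The core of a site, the intersection of Apollonian balls with effective weights at
least `1 + εS`, is `(3/εS)`-fat: it is sandwiched between two balls centered at `s` whose
radii ratio is at most `3/εS`. -/
theorem core_is_fat (d : ℕ) (hd : 1 ≤ d) (εS : ℝ) (hεS : εS ∈ Set.Ioc (0 : ℝ) 1)
    {ι : Type*} (J : Finset ι) (hJ : J.Nonempty)
    (s : EuclideanSpace ℝ (Fin d)) (sj : ι → EuclideanSpace ℝ (Fin d)) (γ : ι → ℝ)
    (hsj : ∀ j ∈ J, sj j ≠ s) (hγ : ∀ j ∈ J, 1 + εS ≤ γ j) :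
    ∃ r₁ r₂ : ℝ, 0 < r₁ ∧ 0 < r₂ ∧
      Metric.closedBall s r₂ ⊆
        (⋂ j ∈ J, {p : EuclideanSpace ℝ (Fin d) | γ j * ‖p - s‖ ≤ ‖p - sj j‖}) ∧
      (⋂ j ∈ J, {p : EuclideanSpace ℝ (Fin d) | γ j * ‖p - s‖ ≤ ‖p - sj j‖}) ⊆
        Metric.closedBall s r₁ ∧
      r₁ ≤ (3 / εS) * r₂ := by
  obtain ⟨hε0, hε1⟩ := hεS
  set f : ι → ℝ := fun j => ‖sj j - s‖ / (γ j + 1) with hf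
  set r₂ : ℝ := J.inf' hJ f with hr₂
  have hγpos : ∀ j ∈ J, 0 < γ j + 1 := fun j hj => by linarith [hγ j hj]
  have hDpos : ∀ j ∈ J, 0 < ‖sj j - s‖ := fun j hj =>
    norm_sub_pos_iff.mpr (hsj j hj)
  have hr₂pos : 0 < r₂ := by
    rw [hr₂, Finset.lt_inf'_iff]
    exact fun j hj => div_pos (hDpos j hj) (hγpos j hj)
  refine ⟨(3 / εS) * r₂, r₂, mul_pos (div_pos (by norm_num) hε0) hr₂pos, hr₂pos, ?_, ?_, le_refl _⟩
  · intro p hp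
    simp only [Set.mem_iInter, Set.mem_setOf_eq]
    intro j hj
    have hd : dist p s ≤ r₂ := Metric.mem_closedBall.mp hp
    have hle : r₂ ≤ f j := Finset.inf'_le f hj
    have hps : ‖p - s‖ ≤ ‖sj j - s‖ / (γ j + 1) := by
      rw [← dist_eq_norm]; exact hd.trans hle
    have h1 : γ j * ‖p - s‖ ≤ ‖sj j - s‖ - ‖p - s‖ := by
      have := hγpos j hj
      have h2 : (γ j + 1) * ‖p - s‖ ≤ ‖sj j - s‖ := by
        calc (γ j + 1) * ‖p - s‖ ≤ (γ j + 1) * (‖sj j - s‖ / (γ j + 1)) := by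
              exact mul_le_mul_of_nonneg_left hps (le_of_lt this)
          _ = ‖sj j - s‖ := by field_simp
      linarith
    have h2 : ‖sj j - s‖ - ‖p - s‖ ≤ ‖p - sj j‖ := by
      have h3 := norm_add_le (sj j - p) (p - s)
      have heq : sj j - p + (p - s) = sj j - s := by abel
      rw [heq] at h3
      rw [norm_sub_rev p (sj j)]
      linarith
    linarith
  · intro p hp
    simp only [Set.mem_iInter, Set.mem_setOf_eq] at hp
    obtain ⟨j, hj, hjeq⟩ := Finset.exists_mem_eq_inf' hJ f
    have hγj := hγ j hj
    have hpj := hp j hj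
    have htri : ‖p - sj j‖ ≤ ‖p - s‖ + ‖sj j - s‖ := by
      have := norm_sub_le (p - s) (sj j - s)
      have heq : p - s - (sj j - s) = p - sj j := by abel
      rw [heq] at this
      rw [norm_sub_rev (sj j) s] at this ⊢
      linarith [norm_sub_le (p - s) (sj j - s)]
    have hbound : (γ j - 1) * ‖p - s‖ ≤ ‖sj j - s‖ := by nlinarith
    have hγm1 : εS ≤ γ j - 1 := by linarith
    have hps : ‖p - s‖ ≤ ‖sj j - s‖ / (γ j - 1) := by
      rw [le_div_iff₀ (by linarith : (0:ℝ) < γ j - 1)]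
      linarith [hbound]
    have hkey : ‖sj j - s‖ / (γ j - 1) ≤ (3 / εS) * (‖sj j - s‖ / (γ j + 1)) := by
      have hD := (hDpos j hj).le
      have h1 : εS * (γ j + 1) ≤ 3 * (γ j - 1) := by nlinarith
      have hγp := hγpos j hj
      rw [div_mul_div_comm, div_le_div_iff₀ (by linarith) (by positivity)]
      nlinarith
    rw [Metric.mem_closedBall, dist_eq_norm, hr₂, hjeq]
    exact hps.trans hkey
end

section
/- Let d ≥ 1, let ε_C > 0, let u ∈ ℝ^d be a unit vector, and let s_i = ℓ_i•u and s_j = ℓ_j•u with ℓ_i, ℓ_j > 0 be two sites on a common ray from the origin 0. Let w_i ≥ 1 + ε_C and w_j > 1 be effective weights, and set t*_k := ℓ_k/(w_k + 1) and t†_k := ℓ_k/(w_k − 1) for k ∈ {i, j}. Assume the two Apollonian balls have equal diameters, i.e., t*_i + t†_i = t*_j + t†_j, that min(t*_i, t*_j) ≥ 1, and that |t*_i − t*_j| ≤ ε_C/2. Then ball(0,s_j,w_j) ⊆ ball(0,s_i,w_i/(1+ε_C)); that is, {p ∈ ℝ^d : w_j·‖p‖ ≤ ‖p − s_j‖} ⊆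 {p ∈ ℝ^d : (w_i/(1+ε_C))·‖p‖ ≤ ‖p − s_i‖}. -/
/-!
For `w > 1` the Apollonian ball `ball(0, ℓ • u, w)` is the Euclidean ball whose diameter is the
segment `[-t† • u, t* • u]`, and two balls with diameters on the same line are nested as soon as
their diameters are. Equal diameters and `|t*ᵢ - t*ⱼ| ≤ ε_C / 2` put each end of the segment of
`sⱼ` within `ε_C / 2` of the corresponding end for `sᵢ`, while enlarging by `1 + ε_C` pushes both
ends for `sᵢ` outwards by at least `ε_C / 2`, because `t*ᵢ ≥ 1`. When `wᵢ = 1 + ε_C` the enlarged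
ball degenerates to the half-space `⟪p, u⟫ ≤ ℓᵢ / 2` and only the near end matters.
-/

open Metric RealInnerProductSpace

section Geometry

variable {E : Type*} [NormedAddCommGroup E] [InnerProductSpace ℝ E] {u : E}

/-- The paper's `ball(0, s, w)`. -/
def apollonianBall (s : E) (w : ℝ) : Set E := {p | w * ‖p‖ ≤ ‖p - s‖}

theorem apollonianBall_eq_closedBall (s : E) {w : ℝ} (hw : 1 < w) :
    apollonianBall s w = closedBall (-((w ^ 2 - 1)⁻¹ • s)) (w / (w ^ 2 - 1) * ‖s‖) := by
  have hk : 0 < w ^ 2 - 1 := by nlinarith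
  ext p
  have key : (w * ‖p‖) ^ 2 - ‖p - s‖ ^ 2 = (w ^ 2 - 1) *
      (‖p - -((w ^ 2 - 1)⁻¹ • s)‖ ^ 2 - (w / (w ^ 2 - 1) * ‖s‖) ^ 2) := by
    rw [sub_neg_eq_add, norm_add_sq_real, norm_sub_sq_real, real_inner_smul_right, norm_smul,
      Real.norm_eq_abs, abs_of_pos (inv_pos.2 hk)]
    field_simp
    ring
  rw [apollonianBall, Set.mem_ofPred_eq, mem_closedBall, dist_eq_norm,
    ← sq_le_sq₀ (by positivity) (norm_nonneg _), ← sq_le_sq₀ (norm_nonneg _) (by positivity),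
    ← sub_nonpos, key]
  exact ⟨fun h ↦ sub_nonpos.1 (nonpos_of_mul_nonpos_right h hk),
    fun h ↦ mul_nonpos_of_nonneg_of_nonpos hk.le (sub_nonpos.2 h)⟩

theorem apollonianBall_one (s : E) :
    apollonianBall s 1 = {p | ⟪p, s⟫ ≤ ‖s‖ ^ 2 / 2} := by
  ext p
  rw [apollonianBall, Set.mem_ofPred_eq, Set.mem_ofPred_eq, one_mul,
    ← sq_le_sq₀ (norm_nonneg _) (norm_nonneg _), norm_sub_sq_real]
  constructor <;> intro h <;> linarith

def axialBall (u : E) (a b : ℝ) : Set E := closedBall (((a + b) / 2) • u) ((b - a) / 2)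

theorem axialBall_subset_axialBall (hu : ‖u‖ = 1) {a b c d : ℝ} (hca : c ≤ a) (hbd : b ≤ d) :
    axialBall u a b ⊆ axialBall u c d := by
  refine closedBall_subset_closedBall' ?_
  rw [dist_eq_norm, ← sub_smul, norm_smul, hu, mul_one, Real.norm_eq_abs]
  cases abs_cases ((a + b) / 2 - (c + d) / 2) <;> linarith

theorem inner_le_of_mem_axialBall (hu : ‖u‖ = 1) {a b : ℝ} {p : E} (hp : p ∈ axialBall u a b) :
    ⟪p, u⟫ ≤ b := by
  set c := (a + b) / 2
  calc ⟪p, u⟫ = ⟪p - c • u, u⟫ + c := by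
        rw [inner_sub_left, real_inner_smul_left, real_inner_self_eq_norm_sq, hu]; ring
    _ ≤ ‖p - c • u‖ * ‖u‖ + c := by gcongr; exact real_inner_le_norm _ _
    _ ≤ (b - a) / 2 + c := by rw [hu, mul_one]; gcongr; exact mem_closedBall_iff_norm.1 hp
    _ = b := by ring

end Geometry

/-- The paper's `t*(0, ℓ • u, w)` for a unit vector `u`. -/
noncomputable def tStar (ℓ w : ℝ) : ℝ := ℓ / (w + 1)

/-- The paper's `t†(0, ℓ • u, w)` for a unit vector `u`. -/
noncomputable def tDagger (ℓ w : ℝ) : ℝ := ℓ / (w - 1)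

section Ray

variable {E : Type*} [NormedAddCommGroup E] [InnerProductSpace ℝ E] {u : E}

theorem apollonianBall_smul_eq_axialBall (hu : ‖u‖ = 1) {ℓ w : ℝ} (hℓ : 0 ≤ ℓ) (hw : 1 < w) :
    apollonianBall (ℓ • u) w = axialBall u (-tDagger ℓ w) (tStar ℓ w) := by
  have : w - 1 ≠ 0 := by linarith
  have : w + 1 ≠ 0 := by linarith
  have : w ^ 2 - 1 ≠ 0 := by nlinarith
  rw [apollonianBall_eq_closedBall _ hw, axialBall, smul_smul, ← neg_smul, norm_smul, hu,
    Real.norm_eq_abs, abs_of_nonneg hℓ, tStar, tDagger]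
  congr 1
  · congr 1
    field_simp
    ring
  · field_simp
    ring

theorem axialBall_subset_apollonianBall_one (hu : ‖u‖ = 1) {a b ℓ : ℝ} (hℓ : 0 ≤ ℓ)
    (hb : b ≤ tStar ℓ 1) : axialBall u a b ⊆ apollonianBall (ℓ • u) 1 := by
  intro p hp
  rw [apollonianBall_one, Set.mem_ofPred_eq, real_inner_smul_right, norm_smul, hu,
    Real.norm_eq_abs, abs_of_nonneg hℓ]
  have hpb : ⟪p, u⟫ ≤ ℓ / 2 := by
    simpa [tStar, one_add_one_eq_two] using (inner_le_of_mem_axialBall hu hp).trans hb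
  nlinarith

end Ray

section Enlargement

variable {ℓ w ε : ℝ}

theorem tStar_add_half_le_tStar_div (hε : 0 < ε) (hw : 1 + ε ≤ w) (ht : 1 ≤ tStar ℓ w) :
    tStar ℓ w + ε / 2 ≤ tStar ℓ (w / (1 + ε)) := by
  have hgain : tStar ℓ (w / (1 + ε)) = tStar ℓ w + tStar ℓ w * (ε * w / (w + (1 + ε))) := by
    have : w + (1 + ε) ≠ 0 := by linarith
    have : w + 1 ≠ 0 := by linarith
    rw [tStar, tStar, div_add_one (by linarith), div_div_eq_mul_div]
    field_simp
    ring
  have hhalf : ε / 2 ≤ ε * w / (w + (1 + ε)) := by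
    rw [le_div_iff₀ (by linarith)]
    nlinarith
  have := le_mul_of_one_le_left (b := ε * w / (w + (1 + ε))) (by linarith) ht
  linarith

theorem tDagger_add_half_le_tDagger_div (hε : 0 < ε) (hw : 1 + ε < w) (ht : 1 ≤ tStar ℓ w) :
    tDagger ℓ w + ε / 2 ≤ tDagger ℓ (w / (1 + ε)) := by
  have hgain :
      tDagger ℓ (w / (1 + ε)) = tDagger ℓ w + tDagger ℓ w * (ε * w / (w - (1 + ε))) := by
    have : w - (1 + ε) ≠ 0 := by linarith
    have : w - 1 ≠ 0 := by linarith
    rw [tDagger, tDagger, div_sub_one (by linarith), div_div_eq_mul_div]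
    field_simp
    ring
  have hhalf : ε / 2 ≤ ε * w / (w - (1 + ε)) := by
    rw [le_div_iff₀ (by linarith)]
    nlinarith
  have hℓ : 0 ≤ ℓ := by
    rw [tStar, one_le_div (by linarith)] at ht
    linarith
  have htd : 1 ≤ tDagger ℓ w :=
    ht.trans (div_le_div_of_nonneg_left hℓ (by linarith) (by linarith))
  have := le_mul_of_one_le_left (b := ε * w / (w - (1 + ε))) (by linarith) htd
  linarith

end Enlargement

theorem scan_cone_covers_general (d : ℕ) (εC : ℝ) (hεC : 0 < εC)
    (u : EuclideanSpace ℝ (Fin d)) (hu : ‖u‖ = 1)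
    (ℓi ℓj wi wj : ℝ) (hℓi : 0 < ℓi) (hℓj : 0 < ℓj)
    (hwi : 1 + εC ≤ wi) (hwj : 1 < wj)
    (hdiam : ℓi / (wi + 1) + ℓi / (wi - 1) = ℓj / (wj + 1) + ℓj / (wj - 1))
    (hmin : 1 ≤ min (ℓi / (wi + 1)) (ℓj / (wj + 1)))
    (hclose : |ℓi / (wi + 1) - ℓj / (wj + 1)| ≤ εC / 2) :
    {p : EuclideanSpace ℝ (Fin d) | wj * ‖p‖ ≤ ‖p - ℓj • u‖} ⊆
      {p : EuclideanSpace ℝ (Fin d) | (wi / (1 + εC)) * ‖p‖ ≤ ‖p - ℓi • u‖} := by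
  change apollonianBall (ℓj • u) wj ⊆ apollonianBall (ℓi • u) (wi / (1 + εC))
  change tStar ℓi wi + tDagger ℓi wi = tStar ℓj wj + tDagger ℓj wj at hdiam
  change |tStar ℓi wi - tStar ℓj wj| ≤ εC / 2 at hclose
  have hti : 1 ≤ tStar ℓi wi := hmin.trans (min_le_left _ _)
  have hshift := abs_sub_le_iff.1 hclose
  have hnear : tStar ℓj wj ≤ tStar ℓi (wi / (1 + εC)) := by
    linarith [tStar_add_half_le_tStar_div hεC hwi hti]
  rw [apollonianBall_smul_eq_axialBall hu hℓj.le hwj]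
  rcases ((one_le_div (by linarith)).2 hwi).eq_or_lt with hv | hv
  · rw [← hv] at hnear ⊢
    exact axialBall_subset_apollonianBall_one hu hℓi.le hnear
  · have hfar : tDagger ℓj wj ≤ tDagger ℓi (wi / (1 + εC)) := by
      linarith [tDagger_add_half_le_tDagger_div hεC ((one_lt_div (by linarith)).1 hv) hti]
    rw [apollonianBall_smul_eq_axialBall hu hℓi.le hv]
    exact axialBall_subset_axialBall hu (neg_le_neg hfar) hnear

/-- Equal-diameter case of the constant-per-ray lemma: for two sites on a common ray from
the origin whose Apollonian balls have equal diameters, near surface-distances at least 1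
and differing by at most `εC/2`, the ball of `s_j` is contained in the `(1+εC)`-enlarged
ball of `s_i`. -/
theorem scan_cone_covers (d : ℕ) (hd : 1 ≤ d) (εC : ℝ) (hεC : 0 < εC)
    (u : EuclideanSpace ℝ (Fin d)) (hu : ‖u‖ = 1)
    (ℓi ℓj wi wj : ℝ) (hℓi : 0 < ℓi) (hℓj : 0 < ℓj)
    (hwi : 1 + εC ≤ wi) (hwj : 1 < wj)
    (hdiam : ℓi / (wi + 1) + ℓi / (wi - 1) = ℓj / (wj + 1) + ℓj / (wj - 1))
    (hmin : 1 ≤ min (ℓi / (wi + 1)) (ℓj / (wj + 1)))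
    (hclose : |ℓi / (wi + 1) - ℓj / (wj + 1)| ≤ εC / 2) :
    {p : EuclideanSpace ℝ (Fin d) | wj * ‖p‖ ≤ ‖p - ℓj • u‖} ⊆
      {p : EuclideanSpace ℝ (Fin d) | (wi / (1 + εC)) * ‖p‖ ≤ ‖p - ℓi • u‖} :=
  scan_cone_covers_general d εC hεC u hu ℓi ℓj wi wj hℓi hℓj hwi hwj hdiam hmin hclose
end

section
/- Let d ≥ 1, let 0 < ε_C < ε_S ≤ 1, let u ∈ ℝ^d be a unit vector, let J be a finite index set, and for each i ∈ J let s_i = ℓ_i•u with ℓ_i > 0 be a site on the common ray from the origin 0 in direction u, with effective weight w_i ≥ 1 + ε_S. Then there exists a subset C ⊆ J with cardinality |C| ≤ 8/(ε_C·ε_S) such that for every j ∈ J, the intersection ⋂_{k ∈ C} ball(0,s_k,w_k) is contained in the (1+ε_C)-enlarged ball ball(0,s_j,w_j/(1+ε_C)); that is, ⋂_{k ∈ C} {p ∈ ℝ^d : w_k·‖p‖ ≤ ‖p − s_k‖} ⊆ {p ∈ ℝ^d : (w_j/(1+ε_C))·‖p‖ ≤ ‖p − s_j‖}. -/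
/-!
For `w > 1` the Apollonian ball `{p | w‖p‖ ≤ ‖p - L u‖}` is the closed Euclidean ball whose
diameter is the segment `[-L/(w-1), L/(w+1)]` of the line `ℝ u`, so containment between two
such balls is containment of these segments. Bucket the sites by `2/(w-1) ∈ (0, 2/ε_S]` in steps
of `ε_C`, giving fewer than `2/(ε_C ε_S) + 1` buckets, and keep in each bucket the site with the
smallest near endpoint `ℓ/(w+1)`. Its ball has a nearer near endpoint than that of any `j` in
the bucket, and its far endpoint `ℓ/(w+1) · (1 + 2/(w-1))` is at most
`ℓ_j/(w_j+1) · (1 + 2/(w_j-1) + ε_C)`, which lies within the far endpoint of the enlarged ball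
of `j`.
-/

open Metric

/-- The paper's `ball(0, s, γ)`: the Apollonian ball of the site `0` against `s`. -/
def apolloniusBall {E : Type*} [NormedAddCommGroup E] (s : E) (γ : ℝ) : Set E :=
  {p | γ * ‖p‖ ≤ ‖p - s‖}

section Ray

variable {E : Type*} [NormedAddCommGroup E] [InnerProductSpace ℝ E] {u : E}

theorem apolloniusBall_smul_eq_closedBall (hu : ‖u‖ = 1) {L w : ℝ} (hL : 0 ≤ L) (hw : 1 < w) :
    apolloniusBall (L • u) w = closedBall ((-(L / (w ^ 2 - 1))) • u) (L / (w ^ 2 - 1) * w) := by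
  have hw2 : 0 < w ^ 2 - 1 := by nlinarith
  set t := L / (w ^ 2 - 1) with ht
  have htL : (w ^ 2 - 1) * t = L := by rw [ht]; field_simp
  ext p
  -- Expanding both squares, the difference of the two sides is `(w² - 1)` times that of the ball.
  have key : ‖p - L • u‖ ^ 2 - (w * ‖p‖) ^ 2 = (w ^ 2 - 1) * ((t * w) ^ 2 - ‖p + t • u‖ ^ 2) := by
    rw [norm_sub_sq_real, norm_add_sq_real, real_inner_smul_right, real_inner_smul_right,
      norm_smul, norm_smul, hu, Real.norm_of_nonneg hL, Real.norm_of_nonneg (by positivity)]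
    rw [← htL]; ring
  simp only [apolloniusBall, Set.mem_ofPred_eq, mem_closedBall, dist_eq_norm, neg_smul,
    sub_neg_eq_add]
  rw [← pow_le_pow_iff_left₀ (by positivity) (norm_nonneg _) two_ne_zero,
    ← pow_le_pow_iff_left₀ (norm_nonneg _) (by positivity) two_ne_zero, ← sub_nonneg, key,
    mul_nonneg_iff_of_pos_left hw2, sub_nonneg]

theorem closedBall_smul_subset_closedBall_smul (hu : ‖u‖ = 1) {a b r s : ℝ}
    (hlo : b - s ≤ a - r) (hhi : a + r ≤ b + s) :
    closedBall (a • u) r ⊆ closedBall (b • u) s := by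
  refine closedBall_subset_closedBall' ?_
  rw [dist_eq_norm, ← sub_smul, norm_smul, hu, mul_one, Real.norm_eq_abs]
  linarith [abs_sub_le_iff.mpr (⟨by linarith, by linarith⟩ : a - b ≤ s - r ∧ b - a ≤ s - r)]

theorem apolloniusBall_smul_subset (hu : ‖u‖ = 1) {L L' w w' : ℝ} (hL : 0 ≤ L) (hL' : 0 ≤ L')
    (hw : 1 < w) (hw' : 1 < w') (hnear : L / (w + 1) ≤ L' / (w' + 1))
    (hfar : L / (w - 1) ≤ L' / (w' - 1)) :
    apolloniusBall (L • u) w ⊆ apolloniusBall (L' • u) w' := by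
  -- On the ray, the ball of `(L, w)` is the segment from `-L / (w - 1)` to `L / (w + 1)`.
  have ends : ∀ {L w : ℝ}, 1 < w → -(L / (w ^ 2 - 1)) - L / (w ^ 2 - 1) * w = -(L / (w - 1)) ∧
      -(L / (w ^ 2 - 1)) + L / (w ^ 2 - 1) * w = L / (w + 1) := by
    intro L w hw
    have : w - 1 ≠ 0 := by linarith
    have : w + 1 ≠ 0 := by linarith
    have : w ^ 2 - 1 = (w - 1) * (w + 1) := by ring
    constructor <;> (rw [this]; field_simp; ring)
  rw [apolloniusBall_smul_eq_closedBall hu hL hw, apolloniusBall_smul_eq_closedBall hu hL' hw']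
  apply closedBall_smul_subset_closedBall_smul hu
  · rw [(ends hw).1, (ends hw').1]; linarith
  · rw [(ends hw).2, (ends hw').2]; linarith

theorem one_add_two_div_sub_one_add_div_add_one_le {ε w : ℝ} (hε : 0 < ε) (hw : 1 + ε < w) :
    (1 + 2 / (w - 1) + ε) / (w + 1) ≤ 1 / (w / (1 + ε) - 1) := by
  have h1 : 0 < w - 1 - ε := by linarith
  have : w / (1 + ε) - 1 = (w - 1 - ε) / (1 + ε) := by field_simp; ring
  rw [this, one_div_div, div_le_div_iff₀ (by linarith) h1, one_add_div (by linarith),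
    div_add' _ _ _ (by linarith), div_mul_eq_mul_div, div_le_iff₀ (by linarith)]
  have hv : 0 < w - 1 := by linarith
  nlinarith [mul_pos hε hv, mul_pos (mul_pos hε hε) hv]

theorem apolloniusBall_smul_subset_enlarged (hu : ‖u‖ = 1) {ε Lk Lj wk wj : ℝ} (hε : 0 < ε)
    (hLk : 0 ≤ Lk) (hLj : 0 ≤ Lj) (hwk : 1 < wk) (hwj : 1 + ε < wj)
    (hnear : Lk / (wk + 1) ≤ Lj / (wj + 1)) (hfar : 2 / (wk - 1) ≤ 2 / (wj - 1) + ε) :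
    apolloniusBall (Lk • u) wk ⊆ apolloniusBall (Lj • u) (wj / (1 + ε)) := by
  have hw'j : wj / (1 + ε) ≤ wj := div_le_self (by linarith) (by linarith)
  have hw' : 1 < wj / (1 + ε) := by rw [one_lt_div (by linarith)]; linarith
  refine apolloniusBall_smul_subset hu hLk hLj hwk hw' ?_ ?_
  · exact hnear.trans (div_le_div_of_nonneg_left hLj (by linarith) (by linarith))
  · calc Lk / (wk - 1) = Lk / (wk + 1) * (1 + 2 / (wk - 1)) := by
          have : wk - 1 ≠ 0 := by linarith
          have : wk + 1 ≠ 0 := by linarith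
          field_simp; ring
      _ ≤ Lj / (wj + 1) * (1 + 2 / (wj - 1) + ε) := by
          have : 0 < 2 / (wk - 1) := div_pos two_pos (by linarith)
          exact mul_le_mul hnear (by linarith) (by linarith) (div_nonneg hLj (by linarith))
      _ = Lj * ((1 + 2 / (wj - 1) + ε) / (wj + 1)) := by ring
      _ ≤ Lj * (1 / (wj / (1 + ε) - 1)) := by
          exact mul_le_mul_of_nonneg_left (one_add_two_div_sub_one_add_div_add_one_le hε hwj) hLj
      _ = Lj / (wj / (1 + ε) - 1) := by ring

end Ray

theorem Finset.exists_subset_card_le_card_image_forall_exists_le {ι β α : Type*} [DecidableEq β]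
    [LinearOrder α] (J : Finset ι) (b : ι → β) (f : ι → α) :
    ∃ C ⊆ J, C.card ≤ (J.image b).card ∧ ∀ j ∈ J, ∃ k ∈ C, b k = b j ∧ f k ≤ f j := by
  classical
  have hmin : ∀ m ∈ J.image b, ∃ k ∈ J, b k = m ∧ ∀ i ∈ J, b i = m → f k ≤ f i := by
    intro m hm
    obtain ⟨k, hk, hkmin⟩ := (J.filter (b · = m)).exists_min_image f
      (by simpa [Finset.filter_nonempty_iff] using hm)
    rw [Finset.mem_filter] at hk
    exact ⟨k, hk.1, hk.2, fun i hi hbi => hkmin i (Finset.mem_filter.mpr ⟨hi, hbi⟩)⟩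
  choose g hgJ hgb hgmin using hmin
  refine ⟨(J.image b).attach.image fun m => g m.1 m.2, ?_, ?_, ?_⟩
  · simpa [Finset.image_subset_iff] using fun m hm => hgJ m hm
  · exact Finset.card_image_le.trans Finset.card_attach.le
  · intro j hj
    have hm : b j ∈ J.image b := Finset.mem_image_of_mem b hj
    exact ⟨g (b j) hm, Finset.mem_image.mpr ⟨⟨b j, hm⟩, Finset.mem_attach _ _, rfl⟩,
      hgb _ hm, hgmin _ hm j hj rfl⟩

theorem Finset.card_image_floor_div_le {ι : Type*} (J : Finset ι) {x : ι → ℝ} {X ε : ℝ}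
    (hε : 0 ≤ ε) (hx : ∀ i ∈ J, x i ≤ X) :
    (J.image fun i => ⌊x i / ε⌋₊).card ≤ ⌊X / ε⌋₊ + 1 := by
  calc (J.image fun i => ⌊x i / ε⌋₊).card ≤ (Finset.range (⌊X / ε⌋₊ + 1)).card := by
        refine Finset.card_le_card fun m hm => ?_
        obtain ⟨i, hi, rfl⟩ := Finset.mem_image.mp hm
        exact Finset.mem_range_succ_iff.mpr
          (Nat.floor_le_floor (div_le_div_of_nonneg_right (hx i hi) hε))
    _ = ⌊X / ε⌋₊ + 1 := Finset.card_range _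

theorem lt_add_of_floor_div_eq {x y ε : ℝ} (hy : 0 ≤ y) (hε : 0 < ε) (h : ⌊x / ε⌋₊ = ⌊y / ε⌋₊) :
    x < y + ε := by
  have : x / ε < y / ε + 1 :=
    (Nat.lt_floor_add_one _).trans_le (by rw [h]; gcongr; exact Nat.floor_le (by positivity))
  rwa [div_lt_iff₀ hε, add_mul, div_mul_cancel₀ _ hε.ne', one_mul] at this

theorem const_per_ray_general (d : ℕ) (εC εS : ℝ)
    (h1 : 0 < εC) (h2 : εC < εS) (h3 : εS ≤ 1)
    (u : EuclideanSpace ℝ (Fin d)) (hu : ‖u‖ = 1)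
    {ι : Type*} (J : Finset ι) (ℓ w : ι → ℝ)
    (hℓ : ∀ i ∈ J, 0 < ℓ i) (hw : ∀ i ∈ J, 1 + εS ≤ w i) :
    ∃ C ⊆ J, (C.card : ℝ) ≤ 8 / (εC * εS) ∧
      ∀ j ∈ J,
        (⋂ k ∈ C, {p : EuclideanSpace ℝ (Fin d) | w k * ‖p‖ ≤ ‖p - ℓ k • u‖}) ⊆
          {p : EuclideanSpace ℝ (Fin d) | (w j / (1 + εC)) * ‖p‖ ≤ ‖p - ℓ j • u‖} := by
  have hεS : 0 < εS := h1.trans h2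
  obtain ⟨C, hCJ, hCcard, hCcover⟩ := J.exists_subset_card_le_card_image_forall_exists_le
    (fun i => ⌊2 / (w i - 1) / εC⌋₊) (fun i => ℓ i / (w i + 1))
  have hx : ∀ i ∈ J, 2 / (w i - 1) ≤ 2 / εS := fun i hi =>
    div_le_div_of_nonneg_left zero_le_two hεS (by linarith [hw i hi])
  refine ⟨C, hCJ, ?_, fun j hj => ?_⟩
  · calc (C.card : ℝ) ≤ ⌊2 / εS / εC⌋₊ + 1 := by
          exact_mod_cast hCcard.trans (J.card_image_floor_div_le h1.le hx)
      _ ≤ 2 / εS / εC + 1 := by gcongr; exact Nat.floor_le (by positivity)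
      _ ≤ 8 / (εC * εS) := by
          rw [div_div, mul_comm εS, div_add_one (by positivity),
            div_le_div_iff_of_pos_right (by positivity)]
          nlinarith
  · obtain ⟨k, hkC, hbucket, hnear⟩ := hCcover j hj
    have hkJ := hCJ hkC
    refine (Set.biInter_subset_of_mem hkC).trans (apolloniusBall_smul_subset_enlarged hu h1
      (hℓ k hkJ).le (hℓ j hj).le (by linarith [hw k hkJ]) (by linarith [hw j hj]) hnear ?_)
    exact (lt_add_of_floor_div_eq (div_nonneg zero_le_two (by linarith [hw j hj])) h1 hbucket).le

/-- Constant per ray: for sites on a common ray from the origin with effective weights at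
least `1 + εS`, there is a subset `C` of at most `8/(εC·εS)` balls whose intersection is
contained in the `(1+εC)`-enlargement of every ball of the family. -/
theorem const_per_ray (d : ℕ) (hd : 1 ≤ d) (εC εS : ℝ)
    (h1 : 0 < εC) (h2 : εC < εS) (h3 : εS ≤ 1)
    (u : EuclideanSpace ℝ (Fin d)) (hu : ‖u‖ = 1)
    {ι : Type*} (J : Finset ι) (ℓ w : ι → ℝ)
    (hℓ : ∀ i ∈ J, 0 < ℓ i) (hw : ∀ i ∈ J, 1 + εS ≤ w i) :
    ∃ C ⊆ J, (C.card : ℝ) ≤ 8 / (εC * εS) ∧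
      ∀ j ∈ J,
        (⋂ k ∈ C, {p : EuclideanSpace ℝ (Fin d) | w k * ‖p‖ ≤ ‖p - ℓ k • u‖}) ⊆
          {p : EuclideanSpace ℝ (Fin d) | (w j / (1 + εC)) * ‖p‖ ≤ ‖p - ℓ j • u‖} :=
  const_per_ray_general d εC εS h1 h2 h3 u hu J ℓ w hℓ hw
end

section
/- For every dimension d ≥ 1 there exists a constant C > 0, depending only on d, with the following property: for every convex set D ⊆ ℝ^d contained in a closed ball of radius R > 0, and for every side length w with 0 < w ≤ R, the set of grid indices k ∈ ℤ^d such that the axis-parallel cube ∏_{i=1}^d [w·k_i, w·(k_i + 1)] intersects the boundary of D is finite and has cardinality at most C·(R/w)^{d−1}. -/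
/-!
At a boundary point `p` of a convex set `D` there is a supporting hyperplane
`⟪a, ·⟫ ≤ ⟪a, p⟫` of `closure D`. If `aᵢ` is a coordinate of `a` of largest modulus, the grid
cube `d + 1` steps from the cube of `p` along `eᵢ`, in the direction of the sign of `aᵢ`, lies
strictly beyond that hyperplane and so misses `closure D`. By convexity, the cubes meeting
`closure D` form an interval in every column of cubes parallel to an axis. Hence a boundary cube
is one of the last `d + 1` cubes, at one of the two ends, of its column in some direction. Since
`D` lies in a ball of radius `R`, there are at most `(4R/w)^(d-1)` columns in each direction, so
there are at most `2d(d+1)(4R/w)^(d-1)` boundary cubes.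
-/

open Finset Function
open scoped RealInnerProductSpace

theorem Convex.exists_inner_le_of_mem_frontier {E : Type*} [NormedAddCommGroup E]
    [InnerProductSpace ℝ E] [FiniteDimensional ℝ E] {D : Set E} (hD : Convex ℝ D) {p : E}
    (hp : p ∈ frontier D) : ∃ a : E, a ≠ 0 ∧ ∀ y ∈ closure D, ⟪a, y⟫ ≤ ⟪a, p⟫ := by
  rcases (interior D).eq_empty_or_nonempty with hint | hint
  · -- `D` lies in a proper affine subspace, and any normal vector to it will do
    have hDne : D.Nonempty := closure_nonempty_iff.mp ⟨p, hp.1⟩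
    have hdir : (affineSpan ℝ D).direction ≠ ⊤ := by
      rw [Ne, AffineSubspace.direction_eq_top_iff_of_nonempty (hDne.mono (subset_affineSpan ℝ D)),
        ← hD.interior_nonempty_iff_affineSpan_eq_top, hint]
      exact Set.not_nonempty_empty
    obtain ⟨a, ha, ha0⟩ := Submodule.exists_mem_ne_zero_of_ne_bot
      (by rwa [Ne, Submodule.orthogonal_eq_bot_iff] : (affineSpan ℝ D).directionᗮ ≠ ⊥)
    have hsub : closure D ⊆ affineSpan ℝ D :=
      closure_minimal (subset_affineSpan ℝ D) (affineSpan ℝ D).closed_of_finiteDimensional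
    refine ⟨a, ha0, fun y hy => le_of_eq ?_⟩
    have := ha _ (AffineSubspace.vsub_mem_direction (hsub hy) (hsub hp.1))
    rw [vsub_eq_sub, inner_sub_left, real_inner_comm a y, real_inner_comm a p] at this
    linarith
  · obtain ⟨f, hf⟩ := geometric_hahn_banach_open_point hD.interior isOpen_interior hp.2
    have hle : closure D ⊆ {y | f y ≤ f p} := by
      rw [← hD.closure_interior_eq_closure_of_nonempty_interior hint]
      exact closure_minimal (fun y hy => (hf y hy).le) (isClosed_le f.continuous continuous_const)
    refine ⟨(InnerProductSpace.toDual ℝ E).symm f, ?_, fun y hy => by simpa using hle hy⟩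
    obtain ⟨x, hx⟩ := hint
    intro h
    simpa [show f = 0 by simpa using h] using hf x hx

variable {ι : Type*}

theorem Set.OrdConnected.add_mem_of_add_mul_mem {S : Set ℤ} (hS : S.OrdConnected) {a m c : ℤ}
    (ha : a ∈ S) (hc : 1 ≤ c) (hac : a + m * c ∈ S) : a + m ∈ S := by
  refine hS.uIcc_subset ha hac (mem_uIcc.2 ?_)
  rcases le_total 0 m with hm | hm
  · exact .inl ⟨by omega, by nlinarith⟩
  · exact .inr ⟨by nlinarith, by omega⟩

theorem update_add_mem_of_update_add_mul_mem [DecidableEq ι] {T : Finset (ι → ℤ)}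
    (hT : ∀ k i, {t : ℤ | update k i t ∈ T}.OrdConnected) {k : ι → ℤ} {i : ι} {m c : ℤ}
    (hk : k ∈ T) (hc : 1 ≤ c) (hkc : update k i (k i + m * c) ∈ T) :
    update k i (k i + m) ∈ T :=
  (hT k i).add_mem_of_add_mul_mem (by simpa using hk) hc hkc

theorem card_filter_update_add_notMem_le [Fintype ι] [DecidableEq ι] (T : Finset (ι → ℤ))
    (hT : ∀ k i, {t : ℤ | update k i t ∈ T}.OrdConnected) (i : ι) {m : ℤ} (hm : m ≠ 0) :
    #{k ∈ T | update k i (k i + m) ∉ T} ≤ #(T.image (update · i 0)) * m.natAbs := by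
  -- of two such `k` in one column, congruent modulo `m`, the lower one (in the direction of `m`)
  -- could be moved by `m` inside the column without leaving `T`
  have hinj : Set.InjOn (fun k : ι → ℤ => (update k i 0, k i % m))
      (({k ∈ T | update k i (k i + m) ∉ T} : Finset (ι → ℤ)) : Set (ι → ℤ)) := by
    rintro k hk k' hk' hkk'
    rw [mem_coe, mem_filter] at hk hk'
    simp only [Prod.mk.injEq] at hkk'
    have hcol : ∀ t, update k' i t = update k i t := fun t => by
      rw [← update_idem (0 : ℤ) t k, ← update_idem (0 : ℤ) t k', hkk'.1]
    obtain ⟨c, hc⟩ := (Int.ModEq.dvd hkk'.2 : m ∣ k' i - k i)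
    rcases lt_trichotomy c 0 with hc0 | rfl | hc0
    · refine absurd (update_add_mem_of_update_add_mul_mem hT hk'.1 (c := -c) (by omega) ?_) hk'.2
      rw [show k' i + m * -c = k i by linarith, hcol, update_eq_self]
      exact hk.1
    · rw [← update_eq_self i k', hcol, show k' i = k i by linarith, update_eq_self]
    · refine absurd (update_add_mem_of_update_add_mul_mem hT hk.1 hc0 ?_) hk.2
      rw [show k i + m * c = k' i by linarith, ← hcol, update_eq_self]
      exact hk'.1
  calc #{k ∈ T | update k i (k i + m) ∉ T}
      ≤ #(T.image (update · i 0) ×ˢ Finset.Ico 0 |m|) := by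
        refine card_le_card_of_injOn _ (fun k hk => ?_) hinj
        rw [mem_coe, mem_filter] at hk
        simp only [coe_product, coe_image, coe_Ico, Set.mem_prod, Set.mem_image, Set.mem_Ico]
        exact ⟨⟨k, hk.1, rfl⟩, Int.emod_nonneg _ hm, Int.emod_lt_abs _ hm⟩
    _ = #(T.image (update · i 0)) * m.natAbs := by
        rw [card_product, Int.card_Ico, sub_zero, ← Int.natCast_natAbs, Int.toNat_natCast]

theorem card_image_update_le_pow [Fintype ι] [DecidableEq ι] {B : ι → Finset ℤ}
    {T : Finset (ι → ℤ)} (hT : T ⊆ Fintype.piFinset B) {N : ℝ} (hB : ∀ j, (#(B j) : ℝ) ≤ N)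
    (i : ι) (x : ℤ) : (#(T.image (update · i x)) : ℝ) ≤ N ^ (Fintype.card ι - 1) := by
  have himage : T.image (update · i x) ⊆ Fintype.piFinset (update B i {x}) := by
    intro y hy
    obtain ⟨k, hk, rfl⟩ := mem_image.1 hy
    rw [Fintype.mem_piFinset]
    intro j
    rcases eq_or_ne j i with rfl | hj
    · simp
    · simpa [update_of_ne hj] using Fintype.mem_piFinset.1 (hT hk) j
  calc (#(T.image (update · i x)) : ℝ) ≤ #(Fintype.piFinset (update B i {x})) := by
        exact_mod_cast card_le_card himage
    _ = ∏ j ∈ univ \ {i}, (#(B j) : ℝ) := by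
        rw [Fintype.card_piFinset, Nat.cast_prod, ← one_mul (∏ j ∈ univ \ {i}, _),
          ← prod_update_of_mem (mem_univ i)]
        refine prod_congr rfl fun j _ => ?_
        rcases eq_or_ne j i with rfl | hj <;> simp [*]
    _ ≤ ∏ _j ∈ univ \ {i}, N := prod_le_prod (fun _ _ => by positivity) fun j _ => hB j
    _ = N ^ (Fintype.card ι - 1) := by
        rw [prod_const, ← compl_eq_univ_sdiff, card_compl, card_singleton]

theorem ncard_le_of_forall_exists_update_add_notMem [Fintype ι] [DecidableEq ι]
    (T : Finset (ι → ℤ)) (hT : ∀ k i, {t : ℤ | update k i t ∈ T}.OrdConnected)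
    {B : ι → Finset ℤ} (hTB : T ⊆ Fintype.piFinset B) {N : ℝ} (hB : ∀ j, (#(B j) : ℝ) ≤ N)
    {M : Finset ℤ} (hM : 0 ∉ M) {S : Set (ι → ℤ)}
    (hS : ∀ k ∈ S, k ∈ T ∧ ∃ i, ∃ m ∈ M, update k i (k i + m) ∉ T) :
    S.Finite ∧
      (S.ncard : ℝ) ≤ Fintype.card ι * (∑ m ∈ M, (m.natAbs : ℝ)) * N ^ (Fintype.card ι - 1) := by
  set A : ι × ℤ → Finset (ι → ℤ) := fun im => {k ∈ T | update k im.1 (k im.1 + im.2) ∉ T}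
  have hsub : S ⊆ ((univ ×ˢ M).biUnion A : Finset (ι → ℤ)) := fun k hk => by
    obtain ⟨hkT, i, m, hm, hkm⟩ := hS k hk
    exact mem_biUnion.2 ⟨(i, m), mem_product.2 ⟨mem_univ i, hm⟩, mem_filter.2 ⟨hkT, hkm⟩⟩
  have hA : ∀ im ∈ univ ×ˢ M, (#(A im) : ℝ) ≤ N ^ (Fintype.card ι - 1) * im.2.natAbs :=
    fun im him => by
      have hm : im.2 ≠ 0 := fun h => hM (h ▸ (mem_product.1 him).2)
      calc (#(A im) : ℝ) ≤ #(T.image (update · im.1 0)) * im.2.natAbs := by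
            exact_mod_cast card_filter_update_add_notMem_le T hT im.1 hm
        _ ≤ N ^ (Fintype.card ι - 1) * im.2.natAbs := by
            gcongr; exact card_image_update_le_pow hTB hB im.1 0
  refine ⟨(finite_toSet _).subset hsub, ?_⟩
  calc (S.ncard : ℝ) ≤ ∑ im ∈ univ ×ˢ M, (#(A im) : ℝ) := by
        exact_mod_cast (Set.ncard_le_ncard hsub (finite_toSet _)).trans
          ((Set.ncard_coe_finset _).trans_le card_biUnion_le)
    _ ≤ ∑ im ∈ univ ×ˢ M, N ^ (Fintype.card ι - 1) * im.2.natAbs := sum_le_sum hA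
    _ = Fintype.card ι * (∑ m ∈ M, (m.natAbs : ℝ)) * N ^ (Fintype.card ι - 1) := by
        simp only [sum_product, ← mul_sum, sum_const, card_univ, nsmul_eq_mul]
        ring

theorem card_Icc_ceil_sub_one_floor_le {x R w : ℝ} (hw : 0 < w) (hwR : w ≤ R) :
    (#(Icc (⌈(x - R) / w⌉ - 1) ⌊(x + R) / w⌋) : ℝ) ≤ 4 * (R / w) := by
  have hRw : 1 ≤ R / w := (one_le_div hw).2 hwR
  have hwidth : (x + R) / w - (x - R) / w = 2 * (R / w) := by ring
  rw [Int.card_Icc, ← Int.cast_natCast, Int.toNat_eq_max, Int.cast_max]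
  push_cast
  exact max_le (by linarith [Int.floor_le ((x + R) / w), Int.le_ceil ((x - R) / w)])
    (by linarith)

def gridCube (w : ℝ) (k : ι → ℤ) : Set (EuclideanSpace ℝ ι) :=
  {p | ∀ i, w * (k i : ℝ) ≤ p i ∧ p i ≤ w * ((k i : ℝ) + 1)}

def boundaryCubes (w : ℝ) (D : Set (EuclideanSpace ℝ ι)) : Set (ι → ℤ) :=
  {k | (gridCube w k ∩ frontier D).Nonempty}

lemma mem_gridCube_update_iff [DecidableEq ι] {w : ℝ} {k : ι → ℤ} {i : ι} {t : ℤ}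
    {p : EuclideanSpace ℝ ι} : p ∈ gridCube w (update k i t) ↔
      p i ∈ Set.Icc (w * (t : ℝ)) (w * ((t : ℝ) + 1)) ∧
        ∀ j ≠ i, p j ∈ Set.Icc (w * (k j : ℝ)) (w * ((k j : ℝ) + 1)) :=
  forall_update_iff k fun j (s : ℤ) => p j ∈ Set.Icc (w * (s : ℝ)) (w * ((s : ℝ) + 1))

theorem Set.OrdConnected.setOf_inter_Icc_nonempty {I : Set ℝ} (hI : I.OrdConnected) {w : ℝ}
    (hw : 0 ≤ w) : {t : ℤ | (I ∩ Set.Icc (w * t) (w * (t + 1))).Nonempty}.OrdConnected := by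
  refine ⟨fun t₁ ⟨x₁, hx₁I, hx₁⟩ t₃ ⟨x₃, hx₃I, hx₃⟩ t ⟨h₁, h₃⟩ => ?_⟩
  have h₁' : w * t₁ ≤ w * t := mul_le_mul_of_nonneg_left (by exact_mod_cast h₁) hw
  have h₃' : w * t ≤ w * t₃ := mul_le_mul_of_nonneg_left (by exact_mod_cast h₃) hw
  by_cases hx : w * t ≤ x₁
  · exact ⟨x₁, hx₁I, hx, by linarith [hx₁.2]⟩
  · exact ⟨w * t, hI.out hx₁I hx₃I ⟨by linarith, by linarith [hx₃.1]⟩, le_rfl, by linarith⟩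

theorem Convex.ordConnected_setOf_gridCube_update_inter_nonempty [DecidableEq ι]
    {C : Set (EuclideanSpace ℝ ι)} (hC : Convex ℝ C) {w : ℝ} (hw : 0 ≤ w) (k : ι → ℤ) (i : ι) :
    {t : ℤ | (gridCube w (update k i t) ∩ C).Nonempty}.OrdConnected := by
  set slab : Set (EuclideanSpace ℝ ι) :=
    {p | ∀ j ≠ i, p j ∈ Set.Icc (w * (k j : ℝ)) (w * ((k j : ℝ) + 1))}
  have hslab : Convex ℝ slab := fun x hx y hy a b ha hb hab j hj =>
    convex_Icc _ _ (hx j hj) (hy j hj) ha hb hab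
  have hI := ((hC.inter hslab).linear_image
    (EuclideanSpace.proj (𝕜 := ℝ) i).toLinearMap).ordConnected
  convert hI.setOf_inter_Icc_nonempty hw using 3 with t
  constructor
  · rintro ⟨p, hp, hpC⟩
    obtain ⟨hpi, hps⟩ := mem_gridCube_update_iff.1 hp
    exact ⟨p i, ⟨p, ⟨hpC, hps⟩, rfl⟩, hpi⟩
  · rintro ⟨_, ⟨p, ⟨hpC, hps⟩, rfl⟩, hpi⟩
    exact ⟨p, mem_gridCube_update_iff.2 ⟨hpi, hps⟩, hpC⟩

lemma abs_inner_sub_le_of_mem_gridCube [Fintype ι] {w : ℝ} {k : ι → ℤ}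
    {p q : EuclideanSpace ℝ ι} (hp : p ∈ gridCube w k) (hq : q ∈ gridCube w k)
    {a : EuclideanSpace ℝ ι} {M : ℝ} (ha : ∀ j, |a j| ≤ M) :
    |⟪a, q - p⟫| ≤ Fintype.card ι * M * w := by
  have hterm : ∀ j, |a j * (q j - p j)| ≤ M * w := fun j => by
    rw [abs_mul]
    exact mul_le_mul (ha j) (abs_sub_le_iff.2 ⟨by linarith [hp j, hq j], by linarith [hp j, hq j]⟩)
      (abs_nonneg _) ((abs_nonneg _).trans (ha j))
  calc |⟪a, q - p⟫| = |∑ j, a j * (q j - p j)| := by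
        simp [PiLp.inner_apply, mul_comm]
    _ ≤ ∑ j, |a j * (q j - p j)| := abs_sum_le_sum_abs _ _
    _ ≤ ∑ _j : ι, M * w := sum_le_sum fun j _ => hterm j
    _ = Fintype.card ι * M * w := by rw [sum_const, card_univ, nsmul_eq_mul, mul_assoc]

lemma sub_smul_single_mem_gridCube_of_mem_update [DecidableEq ι] {w : ℝ} {k : ι → ℤ} {i : ι}
    {n : ℤ} {q : EuclideanSpace ℝ ι} (hq : q ∈ gridCube w (update k i (k i + n))) :
    q - (w * n) • EuclideanSpace.single i 1 ∈ gridCube w k := by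
  intro j
  have hqj := hq j
  rcases eq_or_ne j i with rfl | hj
  · simp only [update_self, Int.cast_add] at hqj
    simp only [PiLp.sub_apply, PiLp.smul_apply, PiLp.single_eq_same, smul_eq_mul, mul_one]
    constructor <;> linarith
  · simpa [update_of_ne hj, hj] using hqj

theorem Convex.exists_gridCube_update_inter_closure_eq_empty [Fintype ι] [DecidableEq ι]
    {D : Set (EuclideanSpace ℝ ι)} (hD : Convex ℝ D) {w : ℝ} (hw : 0 < w) {k : ι → ℤ}
    {p : EuclideanSpace ℝ ι} (hpD : p ∈ frontier D) (hpk : p ∈ gridCube w k) :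
    ∃ i, ∃ m ∈ ({(Fintype.card ι : ℤ) + 1, -((Fintype.card ι : ℤ) + 1)} : Finset ℤ),
      gridCube w (update k i (k i + m)) ∩ closure D = ∅ := by
  obtain ⟨a, ha0, hsupp⟩ := hD.exists_inner_le_of_mem_frontier hpD
  obtain ⟨j, hj⟩ : ∃ j, a j ≠ 0 := by
    by_contra! h
    exact ha0 (PiLp.ext h)
  obtain ⟨i, -, hi⟩ := exists_max_image univ (fun j => |a j|) ⟨j, mem_univ j⟩
  have hai : 0 < |a i| := (abs_pos.2 hj).trans_le (hi j (mem_univ j))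
  set m : ℤ := if 0 ≤ a i then Fintype.card ι + 1 else -(Fintype.card ι + 1)
  have hm : (m : ℝ) * a i = (Fintype.card ι + 1) * |a i| := by
    unfold m; split_ifs with h
    · push_cast; rw [abs_of_nonneg h]
    · push_cast; rw [abs_of_neg (not_le.1 h)]; ring
  refine ⟨i, m, by unfold m; split_ifs <;> simp, Set.eq_empty_iff_forall_notMem.2 ?_⟩
  rintro q ⟨hq, hqD⟩
  -- `q - w m eᵢ` lies in the cube of `p`, so `⟪a, q - p⟫ ≥ (|ι| + 1) w |aᵢ| - |ι| w |aᵢ| > 0`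
  have hbound := abs_inner_sub_le_of_mem_gridCube hpk
    (sub_smul_single_mem_gridCube_of_mem_update hq) (fun j => hi j (mem_univ j))
  have hsplit : ⟪a, q - p⟫ =
      ⟪a, q - (w * m) • EuclideanSpace.single i 1 - p⟫ + w * (m * a i) := by
    simp only [inner_sub_right, inner_smul_right, EuclideanSpace.inner_single_right,
      Real.ringHom_apply, one_mul]
    ring
  have hle : ⟪a, q - p⟫ ≤ 0 := by
    rw [inner_sub_right]; linarith [hsupp q hqD]
  rw [hsplit, hm] at hle
  nlinarith [abs_le.1 hbound, mul_pos hw hai]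

theorem mem_Icc_of_gridCube_inter_closedBall_nonempty [Fintype ι] {w : ℝ} (hw : 0 < w)
    {k : ι → ℤ} {c : EuclideanSpace ℝ ι} {R : ℝ}
    (hk : (gridCube w k ∩ Metric.closedBall c R).Nonempty) (j : ι) :
    k j ∈ Icc (⌈(c j - R) / w⌉ - 1) ⌊(c j + R) / w⌋ := by
  obtain ⟨p, hpk, hpc⟩ := hk
  have hpj : |p j - c j| ≤ R := (PiLp.dist_apply_le p c j).trans (Metric.mem_closedBall.1 hpc)
  obtain ⟨hlo, hhi⟩ := abs_le.1 hpj
  rw [mem_Icc, sub_le_iff_le_add, Int.ceil_le, Int.le_floor, div_le_iff₀ hw, le_div_iff₀ hw]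
  push_cast
  constructor <;> linarith [hpk j]

theorem Convex.boundaryCubes_finite_and_ncard_le [Fintype ι] [DecidableEq ι]
    {D : Set (EuclideanSpace ℝ ι)} (hD : Convex ℝ D) {c : EuclideanSpace ℝ ι} {R w : ℝ}
    (hDR : D ⊆ Metric.closedBall c R) (hw : 0 < w) (hwR : w ≤ R) :
    (boundaryCubes w D).Finite ∧ ((boundaryCubes w D).ncard : ℝ) ≤
      Fintype.card ι * (2 * (Fintype.card ι + 1)) * (4 * (R / w)) ^ (Fintype.card ι - 1) := by
  classical
  set B : ι → Finset ℤ := fun j => Icc (⌈(c j - R) / w⌉ - 1) ⌊(c j + R) / w⌋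
  set T : Finset (ι → ℤ) := {k ∈ Fintype.piFinset B | (gridCube w k ∩ closure D).Nonempty}
  have hclD : closure D ⊆ Metric.closedBall c R :=
    closure_minimal hDR Metric.isClosed_closedBall
  have hmemT : ∀ k, k ∈ T ↔ (gridCube w k ∩ closure D).Nonempty := fun k =>
    ⟨fun hk => (mem_filter.1 hk).2, fun hk => mem_filter.2 ⟨Fintype.mem_piFinset.2 fun j =>
      mem_Icc_of_gridCube_inter_closedBall_nonempty hw
        (hk.mono (Set.inter_subset_inter_right _ hclD)) j, hk⟩⟩
  have hM : ∑ m ∈ ({(Fintype.card ι : ℤ) + 1, -((Fintype.card ι : ℤ) + 1)} : Finset ℤ),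
      (m.natAbs : ℝ) = 2 * (Fintype.card ι + 1) := by
    rw [sum_pair (by omega), Int.natAbs_neg, show ((Fintype.card ι : ℤ) + 1).natAbs =
      Fintype.card ι + 1 by omega]
    push_cast
    ring
  rw [← hM]
  refine ncard_le_of_forall_exists_update_add_notMem T
    (fun k i => by simpa only [hmemT] using
      hD.closure.ordConnected_setOf_gridCube_update_inter_nonempty hw.le k i)
    (filter_subset _ _) (fun j => card_Icc_ceil_sub_one_floor_le hw hwR) (by simp; omega) ?_
  rintro k ⟨p, hpk, hpD⟩
  refine ⟨(hmemT k).2 ⟨p, hpk, frontier_subset_closure hpD⟩, ?_⟩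
  simpa only [hmemT, Set.not_nonempty_iff_eq_empty] using
    hD.exists_gridCube_update_inter_closure_eq_empty hw hpD hpk

theorem grid_cubes_meeting_convex_boundary_general (d : ℕ) :
    ∃ C : ℝ, 0 < C ∧
      ∀ (D : Set (EuclideanSpace ℝ (Fin d))) (c : EuclideanSpace ℝ (Fin d)) (R : ℝ),
        0 < R → Convex ℝ D → D ⊆ Metric.closedBall c R →
        ∀ w : ℝ, 0 < w → w ≤ R →
          {k : Fin d → ℤ |
              ({p : EuclideanSpace ℝ (Fin d) |
                  ∀ i, w * (k i : ℝ) ≤ p i ∧ p i ≤ w * ((k i : ℝ) + 1)} ∩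
                frontier D).Nonempty}.Finite ∧
          (({k : Fin d → ℤ |
              ({p : EuclideanSpace ℝ (Fin d) |
                  ∀ i, w * (k i : ℝ) ≤ p i ∧ p i ≤ w * ((k i : ℝ) + 1)} ∩
                frontier D).Nonempty}.ncard : ℝ) ≤ C * (R / w) ^ (d - 1)) := by
  refine ⟨2 * (d + 1) ^ 2 * 4 ^ (d - 1), by positivity, ?_⟩
  intro D c R _ hD hDR w hw hwR
  obtain ⟨hfin, hcard⟩ := hD.boundaryCubes_finite_and_ncard_le hDR hw hwR
  refine ⟨hfin, hcard.trans ?_⟩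
  have hpow : 0 ≤ (4 : ℝ) ^ (d - 1) * (R / w) ^ (d - 1) := by positivity
  rw [Fintype.card_fin, mul_pow]
  nlinarith

/-- Surface-area lemma, counting form: there is a dimension-dependent constant `C` such
that at most `C·(R/w)^(d−1)` axis-parallel grid cubes of side length `w` meet the
boundary of a convex set contained in a ball of radius `R ≥ w`. -/
theorem grid_cubes_meeting_convex_boundary (d : ℕ) (hd : 1 ≤ d) :
    ∃ C : ℝ, 0 < C ∧
      ∀ (D : Set (EuclideanSpace ℝ (Fin d))) (c : EuclideanSpace ℝ (Fin d)) (R : ℝ),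
        0 < R → Convex ℝ D → D ⊆ Metric.closedBall c R →
        ∀ w : ℝ, 0 < w → w ≤ R →
          {k : Fin d → ℤ |
              ({p : EuclideanSpace ℝ (Fin d) |
                  ∀ i, w * (k i : ℝ) ≤ p i ∧ p i ≤ w * ((k i : ℝ) + 1)} ∩
                frontier D).Nonempty}.Finite ∧
          (({k : Fin d → ℤ |
              ({p : EuclideanSpace ℝ (Fin d) |
                  ∀ i, w * (k i : ℝ) ≤ p i ∧ p i ≤ w * ((k i : ℝ) + 1)} ∩
                frontier D).Nonempty}.ncard : ℝ) ≤ C * (R / w) ^ (d - 1)) :=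
  grid_cubes_meeting_convex_boundary_general d
end
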